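/- arXiv:1210.2420 — 2 statements merged into one kernel-verified Lean document; each statement's English description precedes it below -/
import Mathlib

section
/- Let R be a group with identity e and r, a ∈ R with a^(2k) = e, a^k central, a^k = r⁴, and (a³r³)² = e, for some k ≥ 12 with k ≡ 4 mod 8. Then a³r³ = r·a^(k-3). -/
theorem stmt_7_general {R : Type*} [Group R] (r a : R) (k : ℕ)
    (hk : 12 ≤ k)
    (h1 : a ^ (2 * k) = 1) (h3 : a ^ k = r ^ 4)
    (h4 : (a ^ 3 * r ^ 3) ^ 2 = 1) :
    a ^ 3 * r ^ 3 = r * a ^ (k - 3) := by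
  have hprod : r * a ^ (k - 3) * (a ^ 3 * r ^ 3) = 1 :=
    calc r * a ^ (k - 3) * (a ^ 3 * r ^ 3)
        = r * (a ^ (k - 3) * a ^ 3) * r ^ 3 := by group
      _ = r * r ^ 4 * r ^ 3 := by rw [pow_sub_mul_pow a (by omega : 3 ≤ k), h3]
      _ = (r ^ 4) ^ 2 := by group
      _ = 1 := by rw [← h3, ← pow_mul, mul_comm, h1]
  calc a ^ 3 * r ^ 3
      = (a ^ 3 * r ^ 3)⁻¹ := (inv_eq_of_mul_eq_one_right (by rwa [sq] at h4)).symm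
    _ = r * a ^ (k - 3) := inv_eq_of_mul_eq_one_left hprod

theorem stmt_7 {R : Type*} [Group R] (r a : R) (k : ℕ)
    (hk : 12 ≤ k) (hk8 : k % 8 = 4)
    (h1 : a ^ (2 * k) = 1) (h2 : a ^ k ∈ Subgroup.center R) (h3 : a ^ k = r ^ 4)
    (h4 : (a ^ 3 * r ^ 3) ^ 2 = 1) :
    a ^ 3 * r ^ 3 = r * a ^ (k - 3) :=
  stmt_7_general r a k hk h1 h3 h4
end

section
/- Let R be a group with identity e and r, a ∈ R satisfying a^(2k) = e, a^k central, a^k = r⁴, (ra)² = e, (a³r³)² = e, and r²a²r² = a², for some k ≥ 12 with k ≡ 4 mod 8. Then a⁴r = r·a^(2k-4). -/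
theorem mul_eq_inv_mul_inv_of_sq_eq_one {G : Type*} [Group G] {x y : G} (h : (x * y) ^ 2 = 1) :
    x * y = y⁻¹ * x⁻¹ := by
  rw [← mul_inv_rev, ← mul_eq_one_iff_eq_inv, ← sq, h]

/-- From `r⁴ = aᵏ` one gets `r⁻¹ = r³ a⁻ᵏ` and `r⁻³ = r a⁻ᵏ`; substituting these into the
involution relations `ar = r⁻¹a⁻¹` and `a³r³ = r⁻³a⁻³` moves `r` past `a⁴`. -/
theorem pow_four_mul_eq_mul_inv_pow {G : Type*} [Group G] {r a : G} {k : ℕ}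
    (hra : a ^ k = r ^ 4) (har : (a * r) ^ 2 = 1) (har3 : (a ^ 3 * r ^ 3) ^ 2 = 1) :
    a ^ 4 * r = r * (a ^ (2 * k + 4))⁻¹ := by
  have hr : r⁻¹ = r ^ 3 * (a ^ k)⁻¹ := by rw [hra]; group
  have hr3 : (r ^ 3)⁻¹ = r * (a ^ k)⁻¹ := by rw [hra]; group
  calc a ^ 4 * r = a ^ 3 * (a * r) := by group
    _ = a ^ 3 * r ^ 3 * (a ^ k)⁻¹ * a⁻¹ := by rw [mul_eq_inv_mul_inv_of_sq_eq_one har, hr]; group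
    _ = r * (a ^ k)⁻¹ * (a ^ 3)⁻¹ * (a ^ k)⁻¹ * a⁻¹ := by
      rw [mul_eq_inv_mul_inv_of_sq_eq_one har3, hr3]
    _ = r * (a ^ (2 * k + 4))⁻¹ := by group

theorem stmt_10_general {R : Type*} [Group R] (r a : R) (k : ℕ)
    (hk : 12 ≤ k)
    (h1 : a ^ (2 * k) = 1) (h3 : a ^ k = r ^ 4)
    (h5 : (a * r) ^ 2 = 1) (h6 : (a ^ 3 * r ^ 3) ^ 2 = 1) :
    a ^ 4 * r = r * a ^ (2 * k - 4) := by
  rw [pow_four_mul_eq_mul_inv_pow h3 h5 h6, pow_sub a (by omega : 4 ≤ 2 * k), pow_add, h1,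
    one_mul, one_mul]

theorem stmt_10 {R : Type*} [Group R] (r a : R) (k : ℕ)
    (hk : 12 ≤ k) (hk8 : k % 8 = 4)
    (h1 : a ^ (2 * k) = 1) (h2 : a ^ k ∈ Subgroup.center R) (h3 : a ^ k = r ^ 4)
    (h4 : (r * a) ^ 2 = 1) (h5 : (a * r) ^ 2 = 1) (h6 : (a ^ 3 * r ^ 3) ^ 2 = 1)
    (h7 : r ^ 2 * a ^ 2 * r ^ 2 = a ^ 2) :
    a ^ 4 * r = r * a ^ (2 * k - 4) :=
  stmt_10_general r a k hk h1 h3 h5 h6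
end
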